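/- Let F, G, H be finite groups and A a multiplicatively written abelian group. Let (U,μ) be an A-subcharacter of F × G and (V,ν) an A-subcharacter of G × H. Let g ∈ G and let g' ∈ p₂(U)·g·p₁(V) (i.e. g' = u·g·v with u ∈ p₂(U), v ∈ p₁(V)). Then: (U,μ) ∼ ᵍ'(V,ν) if and only if (U,μ) ∼ ᵍ(V,ν); |Γ∩(U, ᵍ'V)| = |Γ∩(U, ᵍV)|; and when these matchings hold, the A-subcharacter (U * ᵍ'V, μ * ᵍ'ν) of F × H lies in the same F × H-orbit (under simultaneous conjugation) as (U * ᵍV, μ * ᵍν). -/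

import Mathlib

open scoped Pointwise

section StarPrelude

variable {F G H I : Type*} [Group F] [Group G] [Group H] [Group I]
variable {A : Type*} [CommGroup A]

/-- The star product of subgroups `U ≤ F × G` and `V ≤ G × H`. -/
def starProd (U : Subgroup (F × G)) (V : Subgroup (G × H)) : Subgroup (F × H) where
  carrier := {p | ∃ g : G, (p.1, g) ∈ U ∧ (g, p.2) ∈ V}
  one_mem' := ⟨1, U.one_mem, V.one_mem⟩
  mul_mem' := by
    rintro ⟨a, b⟩ ⟨c, d⟩ ⟨g, h1, h2⟩ ⟨g', h1', h2'⟩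
    exact ⟨g * g', U.mul_mem h1 h1', V.mul_mem h2 h2'⟩
  inv_mem' := by
    rintro ⟨a, b⟩ ⟨g, h1, h2⟩
    exact ⟨g⁻¹, U.inv_mem h1, V.inv_mem h2⟩

infixl:70 " ⋆ " => starProd

theorem mem_starProd {U : Subgroup (F × G)} {V : Subgroup (G × H)} {p : F × H} :
    p ∈ U ⋆ V ↔ ∃ g : G, (p.1, g) ∈ U ∧ (g, p.2) ∈ V := Iff.rfl

/-- `Γ(U,V) = {(f,g,h) : (f,g) ∈ U, (g,h) ∈ V}`. -/
def gammaSet (U : Subgroup (F × G)) (V : Subgroup (G × H)) : Set (F × G × H) :=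
  {p | (p.1, p.2.1) ∈ U ∧ (p.2.1, p.2.2) ∈ V}

/-- `Γ∩(U,V) = {g ∈ G : (1,g) ∈ U and (g,1) ∈ V}`. -/
def gammaCap (U : Subgroup (F × G)) (V : Subgroup (G × H)) : Set G :=
  {g | ((1 : F), g) ∈ U ∧ (g, (1 : H)) ∈ V}

/-- `p₁(U)`, the image of `U ≤ F × G` in `F`. -/
def proj1 (U : Subgroup (F × G)) : Subgroup F := U.map (MonoidHom.fst F G)

/-- `p₂(U)`, the image of `U ≤ F × G` in `G`. -/
def proj2 (U : Subgroup (F × G)) : Subgroup G := U.map (MonoidHom.snd F G)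

/-- `k₁(U) = {f : (f,1) ∈ U}`. -/
def ker1 (U : Subgroup (F × G)) : Set F := {f | (f, (1 : G)) ∈ U}

/-- `k₂(U) = {g : (1,g) ∈ U}`. -/
def ker2 (U : Subgroup (F × G)) : Set G := {g | ((1 : F), g) ∈ U}

end StarPrelude
section CharPrelude

variable {F G H I : Type*} [Group F] [Group G] [Group H] [Group I]
variable {A : Type*} [CommGroup A]

/-- The conjugate `ᵉU = e·U·e⁻¹` of a subgroup `U` of `E`. -/
def conjSub {E : Type*} [Group E] (e : E) (U : Subgroup E) : Subgroup E :=
  U.map (MulAut.conj e).toMonoidHom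

/-- The conjugate `ᵉμ` of an `A`-character `μ : U → A`, defined by `ᵉμ(e·t·e⁻¹) = μ(t)`. -/
def conjChar {E : Type*} [Group E] (e : E) {U : Subgroup E} (μ : U →* A) :
    conjSub e U →* A :=
  μ.comp ((MulAut.conj e).subgroupMap U).symm.toMonoidHom

/-- The matching relation `(U,μ) ∼ (V,ν)`: `μ(1,g)·ν(g,1) = 1` for all `g ∈ Γ∩(U,V)`. -/
def Matches {U : Subgroup (F × G)} {V : Subgroup (G × H)} (μ : U →* A) (ν : V →* A) : Prop :=
  ∀ (g : G) (hU : ((1 : F), g) ∈ U) (hV : (g, (1 : H)) ∈ V),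
    μ ⟨(1, g), hU⟩ * ν ⟨(g, 1), hV⟩ = 1

theorem charStar_aux {U : Subgroup (F × G)} {V : Subgroup (G × H)}
    {μ : U →* A} {ν : V →* A} (hm : Matches μ ν)
    (f : F) (k : H) (g g' : G)
    (h1 : (f, g) ∈ U) (h2 : (g, k) ∈ V) (h1' : (f, g') ∈ U) (h2' : (g', k) ∈ V) :
    μ ⟨(f, g), h1⟩ * ν ⟨(g, k), h2⟩ = μ ⟨(f, g'), h1'⟩ * ν ⟨(g', k), h2'⟩ := by
  have hx1 : ((1 : F), g * g'⁻¹) ∈ U := by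
    have := U.mul_mem h1 (U.inv_mem h1')
    simpa [Prod.ext_iff] using this
  have hx2 : (g * g'⁻¹, (1 : H)) ∈ V := by
    have := V.mul_mem h2 (V.inv_mem h2')
    simpa [Prod.ext_iff] using this
  have key := hm (g * g'⁻¹) hx1 hx2
  have e1 : (⟨(f, g), h1⟩ : U) = ⟨((1 : F), g * g'⁻¹), hx1⟩ * ⟨(f, g'), h1'⟩ := by
    apply Subtype.ext
    simp [Prod.ext_iff]
  have e2 : (⟨(g, k), h2⟩ : V) = ⟨(g * g'⁻¹, (1 : H)), hx2⟩ * ⟨(g', k), h2'⟩ := by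
    apply Subtype.ext
    simp [Prod.ext_iff]
  rw [e1, e2, map_mul, map_mul, mul_mul_mul_comm, key, one_mul]

/-- The underlying function of the star product `μ * ν` of two matching `A`-characters. -/
noncomputable def charStarFun {U : Subgroup (F × G)} {V : Subgroup (G × H)}
    (μ : U →* A) (ν : V →* A) (p : U ⋆ V) : A :=
  μ ⟨((p : F × H).1, (mem_starProd.mp p.2).choose), (mem_starProd.mp p.2).choose_spec.1⟩ *
    ν ⟨((mem_starProd.mp p.2).choose, (p : F × H).2), (mem_starProd.mp p.2).choose_spec.2⟩

theorem charStarFun_eq {U : Subgroup (F × G)} {V : Subgroup (G × H)}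
    {μ : U →* A} {ν : V →* A} (hm : Matches μ ν) (p : U ⋆ V) (g : G)
    (h1 : ((p : F × H).1, g) ∈ U) (h2 : (g, (p : F × H).2) ∈ V) :
    charStarFun μ ν p = μ ⟨((p : F × H).1, g), h1⟩ * ν ⟨(g, (p : F × H).2), h2⟩ :=
  charStar_aux hm _ _ _ _ _ _ h1 h2

/-- The star product `μ * ν : U * V → A` of two matching `A`-characters, characterized by
`(μ * ν)(f,h) = μ(f,g)·ν(g,h)` whenever `(f,g) ∈ U` and `(g,h) ∈ V`. -/
noncomputable def charStar {U : Subgroup (F × G)} {V : Subgroup (G × H)}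
    {μ : U →* A} {ν : V →* A} (hm : Matches μ ν) : (U ⋆ V : Subgroup (F × H)) →* A where
  toFun := charStarFun μ ν
  map_one' := by
    show charStarFun μ ν 1 = 1
    rw [charStarFun_eq hm 1 1 (by exact U.one_mem) (by exact V.one_mem)]
    have e1 : (⟨(((1 : U ⋆ V) : F × H).1, (1 : G)), by exact U.one_mem⟩ : U) = 1 := by
      apply Subtype.ext; simp [Prod.ext_iff]
    have e2 : (⟨((1 : G), ((1 : U ⋆ V) : F × H).2), by exact V.one_mem⟩ : V) = 1 := by
      apply Subtype.ext; simp [Prod.ext_iff]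
    rw [e1, e2, map_one, map_one, one_mul]
  map_mul' p q := by
    show charStarFun μ ν (p * q) = charStarFun μ ν p * charStarFun μ ν q
    obtain ⟨gp, hp1, hp2⟩ := mem_starProd.mp p.2
    obtain ⟨gq, hq1, hq2⟩ := mem_starProd.mp q.2
    have hpq1 : (((p * q : U ⋆ V) : F × H).1, gp * gq) ∈ U := by
      have := U.mul_mem hp1 hq1
      simpa [Prod.ext_iff] using this
    have hpq2 : (gp * gq, ((p * q : U ⋆ V) : F × H).2) ∈ V := by
      have := V.mul_mem hp2 hq2
      simpa [Prod.ext_iff] using this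
    rw [charStarFun_eq hm p gp hp1 hp2, charStarFun_eq hm q gq hq1 hq2,
      charStarFun_eq hm (p * q) (gp * gq) hpq1 hpq2]
    have e1 : (⟨(((p * q : U ⋆ V) : F × H).1, gp * gq), hpq1⟩ : U) =
        ⟨(((p : F × H)).1, gp), hp1⟩ * ⟨(((q : F × H)).1, gq), hq1⟩ := by
      apply Subtype.ext; simp [Prod.ext_iff]
    have e2 : (⟨(gp * gq, ((p * q : U ⋆ V) : F × H).2), hpq2⟩ : V) =
        ⟨(gp, ((p : F × H)).2), hp2⟩ * ⟨(gq, ((q : F × H)).2), hq2⟩ := by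
      apply Subtype.ext; simp [Prod.ext_iff]
    rw [e1, e2, map_mul, map_mul, mul_mul_mul_comm]

theorem charStar_apply {U : Subgroup (F × G)} {V : Subgroup (G × H)}
    {μ : U →* A} {ν : V →* A} (hm : Matches μ ν) (p : F × H) (hp : p ∈ U ⋆ V)
    (g : G) (h1 : (p.1, g) ∈ U) (h2 : (g, p.2) ∈ V) :
    charStar hm ⟨p, hp⟩ = μ ⟨(p.1, g), h1⟩ * ν ⟨(g, p.2), h2⟩ :=
  charStarFun_eq hm ⟨p, hp⟩ g h1 h2

end CharPrelude

/-!
Choose `(f, u) ∈ U` and `(v, h) ∈ V`. Conjugation by `(f, u)` fixes `(U, μ)`, and as `(v, h)` fixes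
`(V, ν)`, conjugating `(V, ν)` by `(u * g * v, 1)` is the same as conjugating it first by `(g, 1)`
and then by `(u, h⁻¹)`. Matching, `Γ∩` and the star product are compatible with conjugating the
left factor by `(a, b) ∈ F × G` and the right one by `(b, c) ∈ G × H`: `Γ∩` gets conjugated by `b`
and `(U * V, μ * ν)` by `(a, c)`. Take `(a, b, c) = (f, u, h⁻¹)` and `e = (f, h⁻¹)`.
-/

section Conjugation

variable {E : Type*} [Group E] {A : Type*} [CommGroup A]

theorem mem_conjSub {e x : E} {T : Subgroup E} : x ∈ conjSub e T ↔ e⁻¹ * x * e ∈ T := by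
  show x ∈ T.map (MulAut.conj e).toMonoidHom ↔ _
  rw [Subgroup.mem_map_equiv, MulAut.conj_symm_apply]

theorem conjChar_apply {e x : E} {T : Subgroup E} (τ : T →* A) (hx : x ∈ conjSub e T) :
    conjChar e τ ⟨x, hx⟩ = τ ⟨e⁻¹ * x * e, mem_conjSub.mp hx⟩ :=
  congrArg τ (Subtype.ext (MulAut.conj_symm_apply e x))

/-- `(T', τ')` is the conjugate `ᵉ(T, τ)`, with the two characters compared pointwise. -/
def IsConjBy (e : E) {T T' : Subgroup E} (τ : T →* A) (τ' : T' →* A) : Prop :=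
  conjSub e T = T' ∧
    ∀ x (hx : x ∈ conjSub e T) (hx' : x ∈ T'), conjChar e τ ⟨x, hx⟩ = τ' ⟨x, hx'⟩

namespace IsConjBy

variable {e : E} {T T' : Subgroup E} {τ : T →* A} {τ' : T' →* A}

theorem mem_iff (h : IsConjBy e τ τ') {x : E} : x ∈ T' ↔ e⁻¹ * x * e ∈ T := by
  rw [← h.1, mem_conjSub]

theorem apply_eq (h : IsConjBy e τ τ') {x y : E} (hx : x ∈ T') (hy : y ∈ T)
    (hxy : e⁻¹ * x * e = y) : τ' ⟨x, hx⟩ = τ ⟨y, hy⟩ := by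
  subst hxy
  rw [← h.2 x (h.1 ▸ hx) hx, conjChar_apply]

theorem of_apply (hmem : ∀ x, x ∈ T' ↔ e⁻¹ * x * e ∈ T)
    (happ : ∀ x (hx : x ∈ T') (hx₀ : e⁻¹ * x * e ∈ T), τ' ⟨x, hx⟩ = τ ⟨_, hx₀⟩) :
    IsConjBy e τ τ' := by
  have hT : conjSub e T = T' := by ext x; rw [mem_conjSub, hmem]
  refine ⟨hT, fun x hx hx' => ?_⟩
  rw [conjChar_apply, happ]

theorem symm (h : IsConjBy e τ τ') : IsConjBy e⁻¹ τ' τ :=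
  of_apply (fun x => by rw [h.mem_iff]; group)
    fun x hx hx₀ => (h.apply_eq hx₀ hx (by group)).symm

theorem trans {e' : E} {T'' : Subgroup E} {τ'' : T'' →* A} (h : IsConjBy e τ τ')
    (h' : IsConjBy e' τ' τ'') : IsConjBy (e' * e) τ τ'' :=
  of_apply (fun x => by rw [h'.mem_iff, h.mem_iff]; group)
    fun x hx hx₀ => by
      rw [h'.apply_eq hx (h'.mem_iff.mp hx) rfl, h.apply_eq _ hx₀ (by group)]

end IsConjBy

theorem isConjBy_conjChar (e : E) {T : Subgroup E} (τ : T →* A) :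
    IsConjBy e τ (conjChar e τ) :=
  ⟨rfl, fun _ _ _ => rfl⟩

theorem isConjBy_of_mem {e : E} {T : Subgroup E} (τ : T →* A) (he : e ∈ T) : IsConjBy e τ τ :=
  IsConjBy.of_apply (fun x => by
      rw [Subgroup.mul_mem_cancel_right T he, Subgroup.mul_mem_cancel_left T (T.inv_mem he)])
    fun x hx hx₀ => by
      have hconj : (⟨e⁻¹ * x * e, hx₀⟩ : T) = ⟨e, he⟩⁻¹ * ⟨x, hx⟩ * ⟨e, he⟩ := rfl
      rw [hconj, map_mul, map_mul, map_inv, mul_right_comm, inv_mul_cancel, one_mul]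

end Conjugation

section StarProduct

variable {F G H : Type*} [Group F] [Group G] [Group H] {A : Type*} [CommGroup A]

@[simp]
theorem mem_conjSub_prod {a : F} {b : G} {x : F} {y : G} {U : Subgroup (F × G)} :
    (x, y) ∈ conjSub (a, b) U ↔ (a⁻¹ * x * a, b⁻¹ * y * b) ∈ U := by
  rw [mem_conjSub]; rfl

theorem conjSub_starProd (a : F) (b : G) (c : H) (U : Subgroup (F × G)) (V : Subgroup (G × H)) :
    conjSub (a, c) (U ⋆ V) = conjSub (a, b) U ⋆ conjSub (b, c) V := by
  ext ⟨x, y⟩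
  simp only [mem_conjSub_prod, mem_starProd]
  constructor
  · rintro ⟨s, hU, hV⟩
    exact ⟨b * s * b⁻¹, by simpa [mul_assoc] using hU, by simpa [mul_assoc] using hV⟩
  · rintro ⟨t, hU, hV⟩
    exact ⟨b⁻¹ * t * b, hU, hV⟩

theorem mem_gammaCap_conjSub {a : F} {b : G} {c : H} {U : Subgroup (F × G)}
    {V : Subgroup (G × H)} {t : G} :
    t ∈ gammaCap (conjSub (a, b) U) (conjSub (b, c) V) ↔ b⁻¹ * t * b ∈ gammaCap U V := by
  simp [gammaCap]

theorem card_gammaCap_eq {a : F} {b : G} {c : H} {U U' : Subgroup (F × G)}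
    {V V' : Subgroup (G × H)} (hU : conjSub (a, b) U = U') (hV : conjSub (b, c) V = V') :
    Nat.card (gammaCap U' V') = Nat.card (gammaCap U V) := by
  subst hU hV
  refine Nat.card_congr ((MulAut.conj b⁻¹).toEquiv.subtypeEquiv fun t => ?_)
  simp [mem_gammaCap_conjSub]

variable {a : F} {b : G} {c : H} {U U' : Subgroup (F × G)} {V V' : Subgroup (G × H)}
  {μ : U →* A} {μ' : U' →* A} {ν : V →* A} {ν' : V' →* A}

theorem IsConjBy.matches (hμ : IsConjBy (a, b) μ μ') (hν : IsConjBy (b, c) ν ν')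
    (hm : Matches μ ν) : Matches μ' ν' := by
  intro t hU' hV'
  have hU : ((1 : F), b⁻¹ * t * b) ∈ U := by simpa using hμ.mem_iff.mp hU'
  have hV : (b⁻¹ * t * b, (1 : H)) ∈ V := by simpa using hν.mem_iff.mp hV'
  rw [hμ.apply_eq hU' hU (by simp), hν.apply_eq hV' hV (by simp)]
  exact hm _ hU hV

theorem IsConjBy.star (hμ : IsConjBy (a, b) μ μ') (hν : IsConjBy (b, c) ν ν')
    (hm : Matches μ ν) (hm' : Matches μ' ν') : IsConjBy (a, c) (charStar hm) (charStar hm') := by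
  refine ⟨by rw [← hμ.1, ← hν.1, conjSub_starProd], fun ⟨x, y⟩ _ hxy' => ?_⟩
  obtain ⟨t, hU', hV'⟩ := hxy'
  have hU : (a⁻¹ * x * a, b⁻¹ * t * b) ∈ U := by simpa using hμ.mem_iff.mp hU'
  have hV : (b⁻¹ * t * b, c⁻¹ * y * c) ∈ V := by simpa using hν.mem_iff.mp hV'
  rw [conjChar_apply]
  calc charStar hm ⟨_, _⟩
      = μ ⟨(a⁻¹ * x * a, b⁻¹ * t * b), hU⟩ * ν ⟨(b⁻¹ * t * b, c⁻¹ * y * c), hV⟩ :=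
        charStar_apply hm _ _ _ hU hV
    _ = μ' ⟨(x, t), hU'⟩ * ν' ⟨(t, y), hV'⟩ := by
        rw [hμ.apply_eq hU' hU (by simp), hν.apply_eq hV' hV (by simp)]
    _ = charStar hm' ⟨(x, y), _⟩ := (charStar_apply hm' _ _ t hU' hV').symm

end StarProduct

theorem stmt13_general {F G H : Type*} [Group F] [Group G] [Group H]
    {A : Type*} [CommGroup A]
    {U : Subgroup (F × G)} {V : Subgroup (G × H)} (μ : U →* A) (ν : V →* A)
    (g u v : G) (hu : u ∈ proj2 U) (hv : v ∈ proj1 V) :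
    (Matches μ (conjChar ((u * g * v, 1) : G × H) ν) ↔
      Matches μ (conjChar ((g, 1) : G × H) ν)) ∧
    (Nat.card (gammaCap U (conjSub ((u * g * v, 1) : G × H) V)) =
      Nat.card (gammaCap U (conjSub ((g, 1) : G × H) V))) ∧
    (∀ (hm : Matches μ (conjChar ((g, 1) : G × H) ν))
      (hm' : Matches μ (conjChar ((u * g * v, 1) : G × H) ν)),
      ∃ e : F × H,
        conjSub e (U ⋆ conjSub ((g, 1) : G × H) V) =
          U ⋆ conjSub ((u * g * v, 1) : G × H) V ∧
        ∀ (p : F × H) (hp : p ∈ conjSub e (U ⋆ conjSub ((g, 1) : G × H) V))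
          (hp' : p ∈ U ⋆ conjSub ((u * g * v, 1) : G × H) V),
          conjChar e (charStar hm) ⟨p, hp⟩ = charStar hm' ⟨p, hp'⟩) := by
  obtain ⟨⟨f, u'⟩, hfu, hu'⟩ := hu
  obtain rfl : u = u' := hu'.symm
  obtain ⟨⟨v', h⟩, hvh, hv'⟩ := hv
  obtain rfl : v = v' := hv'.symm
  have hμ : IsConjBy ((f, u) : F × G) μ μ := isConjBy_of_mem μ hfu
  have hν : IsConjBy ((u, h⁻¹) : G × H) (conjChar ((g, 1) : G × H) ν)
      (conjChar ((u * g * v, 1) : G × H) ν) := by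
    have he : ((u, h⁻¹) : G × H) = (u * g * v, 1) * ((v, h)⁻¹ * (g, 1)⁻¹) := by
      ext <;> simp [mul_assoc]
    rw [he]
    exact ((isConjBy_conjChar _ ν).symm.trans (isConjBy_of_mem ν (V.inv_mem hvh))).trans
      (isConjBy_conjChar _ ν)
  refine ⟨⟨fun hm' => hμ.symm.matches hν.symm hm', hμ.matches hν⟩,
    card_gammaCap_eq hμ.1 hν.1, fun hm hm' => ⟨(f, h⁻¹), hμ.star hν hm hm'⟩⟩

/-- For `g ∈ G` and `g' = u·g·v ∈ p₂(U)·g·p₁(V)`: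
`(U,μ) ∼ ᵍ'(V,ν)` iff `(U,μ) ∼ ᵍ(V,ν)`; `|Γ∩(U, ᵍ'V)| = |Γ∩(U, ᵍV)|`; and when these
matchings hold, `(U * ᵍ'V, μ * ᵍ'ν)` and `(U * ᵍV, μ * ᵍν)` lie in the same
`F × H`-orbit under simultaneous conjugation. -/
theorem stmt13 {F G H : Type*} [Group F] [Group G] [Group H]
    [Finite F] [Finite G] [Finite H] {A : Type*} [CommGroup A]
    {U : Subgroup (F × G)} {V : Subgroup (G × H)} (μ : U →* A) (ν : V →* A)
    (g u v : G) (hu : u ∈ proj2 U) (hv : v ∈ proj1 V) :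
    (Matches μ (conjChar ((u * g * v, 1) : G × H) ν) ↔
      Matches μ (conjChar ((g, 1) : G × H) ν)) ∧
    (Nat.card (gammaCap U (conjSub ((u * g * v, 1) : G × H) V)) =
      Nat.card (gammaCap U (conjSub ((g, 1) : G × H) V))) ∧
    (∀ (hm : Matches μ (conjChar ((g, 1) : G × H) ν))
      (hm' : Matches μ (conjChar ((u * g * v, 1) : G × H) ν)),
      ∃ e : F × H,
        conjSub e (U ⋆ conjSub ((g, 1) : G × H) V) =
          U ⋆ conjSub ((u * g * v, 1) : G × H) V ∧
        ∀ (p : F × H) (hp : p ∈ conjSub e (U ⋆ conjSub ((g, 1) : G × H) V))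
          (hp' : p ∈ U ⋆ conjSub ((u * g * v, 1) : G × H) V),
          conjChar e (charStar hm) ⟨p, hp⟩ = charStar hm' ⟨p, hp'⟩) :=
  stmt13_general μ ν g u v hu hv
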